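/- Let p ≥ 1, let x_i (i ∈ ℤ) be a p-periodic sequence in a commutative ring, and set X_j^{(n)} = P_n(x_j,…,x_{j+n−1}) and d = X_0^{(p)} − X_1^{(p−2)} (with the convention X_j^{(−1)} = 0, X_j^{(0)} = 1). Suppose that for all admissible indices the multiplication identities X_j^{(m)}·X_0^{(n)} = X_0^{(m+j+kp)}·X_j^{(n−j−kp)} + X_0^{(j+kp−1)}·X_{n+1}^{(m+j+kp−n−1)} hold. Then for every l ≥ 1 and 0 ≤ k ≤ p−1, X_0^{(k)}·F_l(d) = X_0^{(lp+k)} − X_{k+1}^{(lp−k−2)}. -/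

import Mathlib

/-!
Extend `X_j^{(n)}` to all `n ∈ ℤ`, negative lengths giving reflected windows with a sign, so that
the three-term recurrence `X_j^{(n+2)} = x_{j+n+1} X_j^{(n+1)} - X_j^{(n)}` holds for every `n`.
By periodicity, `n ↦ X_j^{(n+p)} + X_j^{(n-p)}` solves the same recurrence, and comparing two
initial values shows it equals `d · X_j^{(n)}`; here one uses that `d = X_j^{(p)} - X_{j+1}^{(p-2)}`,
the trace of the monodromy over one period, does not depend on `j`. The Chebyshev recurrence of `F_l` then gives
`F_l(d) · X_j^{(n)} = X_j^{(n+lp)} + X_j^{(n-lp)}`, and for `j = 0`, `n = k` the reflected term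
`X_0^{(k-lp)}` is `-X_{k+1}^{(lp-k-2)}`.
-/

/-- Generalized Chebyshev polynomial on the window `x j, x (j+1), …, x (j+n-1)`
of a bi-infinite sequence: `Pz x j n = P_n(x_j, …, x_{j+n−1})`. -/
def Pz {R : Type*} [CommRing R] (x : ℤ → R) (j : ℤ) : ℕ → R
  | 0 => 1
  | 1 => x j
  | (n + 2) => x (j + (n + 1)) * Pz x j (n + 1) - Pz x j n

/-- `Xn x j n = X_j^{(n)}`, with the convention `X_j^{(n)} = 0` for `n < 0`. -/
def Xn {R : Type*} [CommRing R] (x : ℤ → R) (j n : ℤ) : R :=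
  if n < 0 then 0 else Pz x j n.toNat

/-- Normalized Chebyshev polynomials of the first kind. -/
noncomputable def F : ℕ → Polynomial ℤ
  | 0 => 2
  | 1 => Polynomial.X
  | (n + 2) => Polynomial.X * F (n + 1) - F n

open Polynomial Function

section Continuant

variable {R : Type*} [CommRing R] (x : ℤ → R)

theorem Pz_add_two (j : ℤ) (n : ℕ) :
    Pz x j (n + 2) = x (j + n + 1) * Pz x j (n + 1) - Pz x j n := by
  rw [Pz, add_assoc]

theorem Pz_add_two_left (n : ℕ) (j : ℤ) :
    Pz x j (n + 2) = x j * Pz x (j + 1) (n + 1) - Pz x (j + 2) n := by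
  induction n using Nat.twoStepInduction generalizing j with
  | zero => simp only [Pz]; ring_nf
  | one => simp only [Pz]; ring_nf
  | more n ih₀ ih₁ =>
    linear_combination (norm := (push_cast; ring_nf))
      Pz_add_two x j (n + 2) + x (j + n + 3) * ih₁ j - ih₀ j
        - x j * Pz_add_two x (j + 1) (n + 1) + Pz_add_two x (j + 2) n

variable {x}

theorem Pz_periodic {c : ℤ} (hx : Periodic x c) (n : ℕ) : Periodic (fun j ↦ Pz x j n) c := by
  induction n using Nat.twoStepInduction with
  | zero => exact fun _ ↦ rfl
  | one => exact hx
  | more n ih₀ ih₁ =>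
    intro j
    simp only [Pz_add_two, ih₀ j, ih₁ j, add_right_comm j c, add_right_comm _ c 1, hx (j + n + 1)]

theorem Xn_periodic {c : ℤ} (hx : Periodic x c) (n : ℤ) : Periodic (fun j ↦ Xn x j n) c := by
  intro j
  simp only [Xn, Pz_periodic hx _ j]

end Continuant

/-- `Xn` continued to all lengths `n : ℤ`: for `n ≤ -2`, `Xext x j n` is minus the continuant of
the window `x (j + n + 1), …, x (j - 2)`. This makes the three-term recurrence hold for all `n`. -/
def Xext {R : Type*} [CommRing R] (x : ℤ → R) (j n : ℤ) : R :=
  if -1 ≤ n then Xn x j n else -Xn x (j + n + 1) (-n - 2)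

section Extension

variable {R : Type*} [CommRing R] (x : ℤ → R)

theorem Xext_of_neg_one_le {n : ℤ} (j : ℤ) (hn : -1 ≤ n) : Xext x j n = Xn x j n := if_pos hn

theorem Xext_natCast (j : ℤ) (n : ℕ) : Xext x j n = Pz x j n := by
  simp [Xext, Xn]

theorem Xext_neg_one (j : ℤ) : Xext x j (-1) = 0 := by
  simp [Xext, Xn]

theorem Xext_zero (j : ℤ) : Xext x j 0 = 1 := by
  simp [Xext, Xn, Pz]

theorem Xext_one (j : ℤ) : Xext x j 1 = x j := by
  simp [Xext, Xn, Pz]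

theorem Xext_neg_two (j : ℤ) : Xext x j (-2) = -1 := by
  simp [Xext, Xn, Pz]

theorem Xext_eq_neg_Xext (j n : ℤ) : Xext x j n = -Xext x (j + n + 1) (-n - 2) := by
  unfold Xext
  split_ifs with h₁ h₂ h₂
  · obtain rfl : n = -1 := by omega
    simp [Xn]
  · ring_nf
  · ring_nf
  · omega

theorem Xext_add_two_left (i : ℤ) {m : ℤ} (hm : -2 ≤ m) :
    Xext x i (m + 2) = x i * Xext x (i + 1) (m + 1) - Xext x (i + 2) m := by
  obtain rfl | rfl | hm : m = -2 ∨ m = -1 ∨ 0 ≤ m := by omega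
  · norm_num [Xext_neg_one, Xext_neg_two, Xext_zero]
  · norm_num [Xext_neg_one, Xext_zero, Xext_one]
  · lift m to ℕ using hm
    simpa only [← Xext_natCast, Nat.cast_add, Nat.cast_ofNat, Nat.cast_one]
      using Pz_add_two_left x m i

theorem Xext_add_two (j n : ℤ) :
    Xext x j (n + 2) = x (j + n + 1) * Xext x j (n + 1) - Xext x j n := by
  obtain rfl | hn | hn : n = -1 ∨ 0 ≤ n ∨ n ≤ -2 := by omega
  · norm_num [Xext_neg_one, Xext_zero, Xext_one]
  · lift n to ℕ using hn
    simpa only [← Xext_natCast, Nat.cast_add, Nat.cast_ofNat, Nat.cast_one]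
      using Pz_add_two x j n
  · have h := Xext_add_two_left x (j + n + 1) (m := -n - 4) (by omega)
    rw [Xext_eq_neg_Xext x j (n + 2), Xext_eq_neg_Xext x j (n + 1), Xext_eq_neg_Xext x j n]
    ring_nf at h ⊢
    linear_combination -h

variable {x}

theorem Xext_periodic {c : ℤ} (hx : Periodic x c) (n : ℤ) :
    Periodic (fun j ↦ Xext x j n) c := by
  intro j
  simp only [Xext, Xn_periodic hx n j, add_right_comm j c, add_right_comm _ c 1,
    Xn_periodic hx (-n - 2) (j + n + 1)]

end Extension

theorem eq_of_three_term_recurrence {R : Type*} [Ring R] {a u v : ℤ → R}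
    (hu : ∀ n, u (n + 2) = a n * u (n + 1) - u n) (hv : ∀ n, v (n + 2) = a n * v (n + 1) - v n)
    (b : ℤ) (h₀ : u b = v b) (h₁ : u (b + 1) = v (b + 1)) : u = v := by
  suffices h : ∀ n, u n = v n ∧ u (n + 1) = v (n + 1) from funext fun n ↦ (h n).1
  intro n
  induction n using Int.inductionOn' (b := b) with
  | zero => exact ⟨h₀, h₁⟩
  | succ k _ ih =>
    refine ⟨ih.2, ?_⟩
    rw [add_assoc, one_add_one_eq_two, hu, hv, ih.1, ih.2]
  | pred k _ ih =>
    refine ⟨?_, by rw [sub_add_cancel]; exact ih.1⟩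
    have hu' := hu (k - 1)
    have hv' := hv (k - 1)
    rw [sub_add_cancel, show k - 1 + 2 = k + 1 by ring] at hu' hv'
    calc u (k - 1) = a (k - 1) * u k - u (k + 1) := by rw [hu', sub_sub_cancel]
      _ = a (k - 1) * v k - v (k + 1) := by rw [ih.1, ih.2]
      _ = v (k - 1) := by rw [hv', sub_sub_cancel]

section Trace

variable {R : Type*} [CommRing R] {x : ℤ → R} {p : ℕ}

theorem Xext_trace_periodic (hx : Periodic x p) :
    Periodic (fun j ↦ Xext x j p - Xext x (j + 1) (p - 2)) 1 := by
  intro j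
  have hl := Xext_add_two_left x j (m := p - 2) (by omega)
  have hr := Xext_add_two x (j + 1) (p - 2)
  rw [sub_add_cancel] at hl hr
  rw [show j + 1 + (p - 2) + 1 = j + p by ring, hx j] at hr
  linear_combination (norm := ring_nf) hr - hl

theorem Xext_trace_eq (hx : Periodic x p) (j : ℤ) :
    Xext x j p - Xext x (j + 1) (p - 2) = Xext x 0 p - Xext x 1 (p - 2) := by
  simpa using (Xext_trace_periodic hx).int_mul j 0

/-- Cayley–Hamilton for the monodromy over one period (trace `d`, determinant `1`): both sides
solve the same recurrence in `n`, so it suffices to compare them at `n = -1` and `n = 0`. -/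
theorem trace_mul_Xext (hx : Periodic x p) (j n : ℤ) :
    (Xext x 0 p - Xext x 1 (p - 2)) * Xext x j n = Xext x j (n + p) + Xext x j (n - p) := by
  set d := Xext x 0 p - Xext x 1 (p - 2)
  refine congrFun (eq_of_three_term_recurrence (a := fun n ↦ x (j + n + 1))
    (u := fun n ↦ d * Xext x j n) (v := fun n ↦ Xext x j (n + p) + Xext x j (n - p))
    (fun n ↦ ?_) (fun n ↦ ?_) (-1) ?_ ?_) n
  · simp only [Xext_add_two]; ring
  · have h₁ := Xext_add_two x j (n + p)
    have h₂ := Xext_add_two x j (n - p)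
    rw [show j + (n + p) + 1 = j + n + 1 + p by ring, hx] at h₁
    rw [show j + (n - p) + 1 = j + n + 1 - p by ring, hx.sub_eq] at h₂
    linear_combination (norm := ring_nf) h₁ + h₂
  · have h := Xext_eq_neg_Xext x j (-1 - p)
    rw [show j + (-1 - p) + 1 = j - p by ring, show -(-1 - (p : ℤ)) - 2 = -1 + p by ring,
      (Xext_periodic hx _).sub_eq] at h
    simp only [Xext_neg_one, mul_zero, h, add_neg_cancel]
  · have h := Xext_eq_neg_Xext x j (-p)
    rw [show j + -(p : ℤ) + 1 = j + 1 - p by ring, neg_neg, (Xext_periodic hx _).sub_eq] at h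
    simp only [neg_add_cancel, zero_add, zero_sub, Xext_zero, mul_one]
    rw [h, ← sub_eq_add_neg, Xext_trace_eq hx]

end Trace

theorem aeval_F_mul {R : Type*} [CommRing R] {u : ℤ → R} {d : R} {c : ℤ}
    (h : ∀ n, d * u n = u (n + c) + u (n - c)) (l : ℕ) (n : ℤ) :
    aeval d (F l) * u n = u (n + l * c) + u (n - l * c) := by
  induction l using Nat.twoStepInduction generalizing n with
  | zero => simp [F, map_ofNat, two_mul]
  | one => simpa [F] using h n
  | more l ih₀ ih₁ =>
    simp only [F, map_sub, map_mul, aeval_X]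
    linear_combination (norm := (push_cast; ring_nf)) d * ih₁ n - ih₀ n
      + h (n + (l + 1) * c) + h (n - (l + 1) * c)

theorem general_difference_property_general {R : Type*} [CommRing R]
    (p : ℕ) (hp : 1 ≤ p) (x : ℤ → R) (hper : ∀ i : ℤ, x (i + p) = x i) :
    ∀ (l : ℕ) (k : ℤ), 1 ≤ l → 0 ≤ k → k ≤ (p : ℤ) - 1 →
      Xn x 0 k * Polynomial.aeval (Xn x 0 p - Xn x 1 ((p : ℤ) - 2)) (F l) =
        Xn x 0 (l * p + k) - Xn x (k + 1) (l * p - k - 2) := by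
  intro l k hl hk hk'
  have hx : Periodic x p := hper
  have hlp : (p : ℤ) ≤ l * p := by exact_mod_cast Nat.le_mul_of_pos_left p hl
  have key := aeval_F_mul (trace_mul_Xext hx 0) l k
  have hreflect := Xext_eq_neg_Xext x 0 (k - l * p)
  rw [show 0 + (k - l * p) + 1 = k + 1 - l * p by ring,
    show -(k - l * p) - 2 = l * p - k - 2 by ring,
    (Xext_periodic (hx.nat_mul l) _).sub_eq] at hreflect
  rw [hreflect, Xext_of_neg_one_le x 0 (by omega), Xext_of_neg_one_le x 0 (by omega),
    Xext_of_neg_one_le x 1 (by omega), Xext_of_neg_one_le x 0 (by omega),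
    Xext_of_neg_one_le x (k + 1) (by omega)] at key
  linear_combination (norm := ring_nf) key

/-- The general difference property: if the periodic generalized Chebyshev
values satisfy the tube multiplication identities, then with
`d = X_0^{(p)} − X_1^{(p−2)}` one has, for all `l ≥ 1` and `0 ≤ k ≤ p−1`,
`X_0^{(k)} · F_l(d) = X_0^{(lp+k)} − X_{k+1}^{(lp−k−2)}`. -/
theorem general_difference_property {R : Type*} [CommRing R]
    (p : ℕ) (hp : 1 ≤ p) (x : ℤ → R) (hper : ∀ i : ℤ, x (i + p) = x i)
    (hmul : ∀ m n j k : ℤ, 0 < m → 0 < n → 0 ≤ j → j ≤ (p : ℤ) - 1 →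
      0 < j + k * p → j + k * p ≤ n → n - j - k * p ≤ m →
      Xn x j m * Xn x 0 n =
        Xn x 0 (m + j + k * p) * Xn x j (n - j - k * p) +
          Xn x 0 (j + k * p - 1) * Xn x (n + 1) (m + j + k * p - n - 1)) :
    ∀ (l : ℕ) (k : ℤ), 1 ≤ l → 0 ≤ k → k ≤ (p : ℤ) - 1 →
      Xn x 0 k * Polynomial.aeval (Xn x 0 p - Xn x 1 ((p : ℤ) - 2)) (F l) =
        Xn x 0 (l * p + k) - Xn x (k + 1) (l * p - k - 2) :=
  general_difference_property_general p hp x hper
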